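/- Let (m₁,m₂,m₃,ξ,p) be a collision solution of the reduced two-body system on [t₀, t*) with t* < ∞ and ξ(t) → +∞ as t → t*⁻. Then p(t) → −∞ and 2p(t) − m₁(t) → −∞ as t → t*⁻ (i.e. the derivative q̇ = 2p − m₁ of the mutual angle tends to −∞ at collision). -/

import Mathlib

open Filter Set Topology

/-!
Write `u = 2p - m₁` for `q̇`. Besides the Casimir `m₁² + m₂² + m₃²`, the system conserves the
energy `E = p² - m₁p + m₃²ξ² - m₂m₃ξ - ξ`, and eliminating `m₃²ξ³` with it gives
`u̇ = 2ξ² - ξu² + ξ(4E + m₁² + m₂² + 3m₃²) - 2 - 2m₂m₃`. So once `ξ` is large, `u̇ ≥ ξ²` wherever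
`u² ≤ ξ/4`. Near the collision this first rules out `u ≥ 0`: `u` could never drop back below
`0`, and `ξ̇ = -(ξ² + 1)u ≤ 0` would keep `ξ` bounded. It then rules out `u² ≤ ξ/4`: that region
could not be left, and `u² + ξ` would be nonincreasing there. Hence `u < -√ξ/2 → -∞`, and
`p = (u + m₁)/2` follows because `m₁` stays bounded.
-/

section Barrier

variable {f f' : ℝ → ℝ} {a b : ℝ}

theorem eq_of_hasDerivAt_zero_Ico (hf : ∀ x ∈ Ico a b, HasDerivAt f 0 x) :
    ∀ x ∈ Ico a b, f x = f a := by
  intro x hx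
  have hsub : Icc a x ⊆ Ico a b := Icc_subset_Ico_right hx.2
  exact constant_of_has_deriv_right_zero
    (fun y hy => (hf y (hsub hy)).continuousAt.continuousWithinAt)
    (fun y hy => (hf y (hsub (Ico_subset_Icc_self hy))).hasDerivWithinAt) x
    (right_mem_Icc.2 hx.1)

theorem nonpos_of_hasDerivAt_neg_of_eq_zero (hf : ∀ x ∈ Ico a b, HasDerivAt f (f' x) x)
    (ha : f a ≤ 0) (hzero : ∀ x ∈ Ico a b, f x = 0 → f' x < 0) : ∀ x ∈ Ico a b, f x ≤ 0 := by
  intro x hx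
  have hsub : Icc a x ⊆ Ico a b := Icc_subset_Ico_right hx.2
  exact image_le_of_deriv_right_lt_deriv_boundary' (B := 0) (B' := 0)
    (fun y hy => (hf y (hsub hy)).continuousAt.continuousWithinAt)
    (fun y hy => (hf y (hsub (Ico_subset_Icc_self hy))).hasDerivWithinAt) ha continuousOn_const
    (fun _ _ => hasDerivWithinAt_const _ _ _)
    (fun y hy => hzero y (hsub (Ico_subset_Icc_self hy))) (right_mem_Icc.2 hx.1)

theorem not_tendsto_atTop_of_hasDerivAt_nonpos (hab : a < b)
    (hf : ∀ x ∈ Ico a b, HasDerivAt f (f' x) x) (hf' : ∀ x ∈ Ico a b, f' x ≤ 0) :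
    ¬ Tendsto f (𝓝[<] b) atTop := by
  intro htop
  have hanti : AntitoneOn f (Ico a b) :=
    antitoneOn_of_hasDerivWithinAt_nonpos (convex_Ico a b)
      (fun x hx => (hf x hx).continuousAt.continuousWithinAt)
      (fun x hx => (hf x (interior_subset hx)).hasDerivWithinAt)
      (fun x hx => hf' x (interior_subset hx))
  obtain ⟨x, hfx, hx⟩ := ((htop.eventually_gt_atTop (f a)).and (Ico_mem_nhdsLT hab)).exists
  exact (hanti (left_mem_Ico.2 hab) hx hx.1).not_gt hfx

end Barrier

namespace ReducedTwoBody

section Collision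

variable {ξ u U : ℝ → ℝ} {a b : ℝ}

theorem neg_of_tendsto_atTop (hξ : ∀ t ∈ Ico a b, HasDerivAt ξ (-(ξ t ^ 2 + 1) * u t) t)
    (hu : ∀ t ∈ Ico a b, HasDerivAt u (U t) t) (hξ1 : ∀ t ∈ Ico a b, 1 ≤ ξ t)
    (hU : ∀ t ∈ Ico a b, u t ^ 2 ≤ ξ t / 4 → ξ t ^ 2 ≤ U t)
    (hcoll : Tendsto ξ (𝓝[<] b) atTop) : ∀ t ∈ Ico a b, u t < 0 := by
  intro t ht
  by_contra! hut
  have hsub : Ico t b ⊆ Ico a b := Ico_subset_Ico_left ht.1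
  have hnonneg : ∀ s ∈ Ico t b, 0 ≤ u s := by
    have hbarrier := nonpos_of_hasDerivAt_neg_of_eq_zero (f := -u) (f' := -U)
      (fun s hs => (hu s (hsub hs)).neg) (by simpa using hut) fun s hs hs0 => by
        have hus : u s = 0 := by simpa using hs0
        have hUs := hU s (hsub hs) (by rw [hus]; linarith [hξ1 s (hsub hs)])
        show -U s < 0
        nlinarith [hξ1 s (hsub hs)]
    exact fun s hs => by simpa using hbarrier s hs
  refine not_tendsto_atTop_of_hasDerivAt_nonpos ht.2 (fun s hs => hξ s (hsub hs))
    (fun s hs => ?_) hcoll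
  exact mul_nonpos_of_nonpos_of_nonneg (neg_nonpos.2 (by positivity)) (hnonneg s hs)

theorem lt_sq_of_tendsto_atTop (hξ : ∀ t ∈ Ico a b, HasDerivAt ξ (-(ξ t ^ 2 + 1) * u t) t)
    (hu : ∀ t ∈ Ico a b, HasDerivAt u (U t) t) (hξ1 : ∀ t ∈ Ico a b, 1 ≤ ξ t)
    (hU : ∀ t ∈ Ico a b, u t ^ 2 ≤ ξ t / 4 → ξ t ^ 2 ≤ U t)
    (hcoll : Tendsto ξ (𝓝[<] b) atTop) : ∀ t ∈ Ico a b, ξ t / 4 < u t ^ 2 := by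
  have hneg := neg_of_tendsto_atTop hξ hu hξ1 hU hcoll
  intro t ht
  by_contra! hle
  have hsub : Ico t b ⊆ Ico a b := Ico_subset_Ico_left ht.1
  have hsmall : ∀ s ∈ Ico t b, u s ^ 2 ≤ ξ s / 4 := by
    have hbarrier := nonpos_of_hasDerivAt_neg_of_eq_zero (f := fun s => u s ^ 2 - ξ s / 4)
      (f' := fun s => u s * (2 * U s + (ξ s ^ 2 + 1) / 4))
      (fun s hs => (((hu s (hsub hs)).pow 2).sub ((hξ s (hsub hs)).div_const 4)).congr_deriv
        (by simp only [Nat.cast_ofNat, Nat.add_one_sub_one, pow_one]; ring))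
      (by simpa using hle) fun s hs hs0 => by
        have hUs := hU s (hsub hs) (by linarith)
        exact mul_neg_of_neg_of_pos (hneg s (hsub hs)) (by nlinarith)
    exact fun s hs => by linarith [hbarrier s hs]
  refine not_tendsto_atTop_of_hasDerivAt_nonpos (f := fun s => u s ^ 2 + ξ s)
    (f' := fun s => u s * (2 * U s - (ξ s ^ 2 + 1))) ht.2
    (fun s hs => (((hu s (hsub hs)).pow 2).add (hξ s (hsub hs))).congr_deriv
      (by simp only [Nat.cast_ofNat, Nat.add_one_sub_one, pow_one]; ring))
    (fun s hs => ?_) (tendsto_atTop_add_left_of_le _ 0 (fun s => sq_nonneg (u s)) hcoll)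
  have hUs := hU s (hsub hs) (hsmall s hs)
  exact mul_nonpos_of_nonpos_of_nonneg (hneg s (hsub hs)).le (by nlinarith [hξ1 s (hsub hs)])

theorem tendsto_atBot_of_tendsto_atTop (hab : a < b)
    (hξ : ∀ t ∈ Ico a b, HasDerivAt ξ (-(ξ t ^ 2 + 1) * u t) t)
    (hu : ∀ t ∈ Ico a b, HasDerivAt u (U t) t) (hξ1 : ∀ t ∈ Ico a b, 1 ≤ ξ t)
    (hU : ∀ t ∈ Ico a b, u t ^ 2 ≤ ξ t / 4 → ξ t ^ 2 ≤ U t)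
    (hcoll : Tendsto ξ (𝓝[<] b) atTop) : Tendsto u (𝓝[<] b) atBot := by
  have hneg := neg_of_tendsto_atTop hξ hu hξ1 hU hcoll
  have hsq := lt_sq_of_tendsto_atTop hξ hu hξ1 hU hcoll
  refine tendsto_atBot.2 fun M => ?_
  filter_upwards [hcoll.eventually_ge_atTop (4 * M ^ 2), Ico_mem_nhdsLT hab] with t hM ht
  nlinarith [hneg t ht, hsq t ht]

end Collision

structure IsSolution (t0 tstar : ℝ) (m1 m2 m3 xi p : ℝ → ℝ) : Prop where
  hasDerivAt_m1 : ∀ t ∈ Ico t0 tstar,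
    HasDerivAt m1 (xi t * (-(m2 t) ^ 2 + (m3 t) ^ 2 + 2 * m2 t * m3 t * xi t)) t
  hasDerivAt_m2 : ∀ t ∈ Ico t0 tstar,
    HasDerivAt m2 (m1 t * m2 t * xi t - m3 t * p t - 2 * m1 t * m3 t * (xi t) ^ 2) t
  hasDerivAt_m3 : ∀ t ∈ Ico t0 tstar, HasDerivAt m3 (m2 t * p t - m1 t * m3 t * xi t) t
  hasDerivAt_xi : ∀ t ∈ Ico t0 tstar, HasDerivAt xi (-((xi t) ^ 2 + 1) * (2 * p t - m1 t)) t
  hasDerivAt_p : ∀ t ∈ Ico t0 tstar,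
    HasDerivAt p (-((xi t) ^ 2 + 1) * (1 + m2 t * m3 t - 2 * (m3 t) ^ 2 * xi t)) t

def energy (m1 m2 m3 ξ p : ℝ) : ℝ := p ^ 2 - m1 * p + m3 ^ 2 * ξ ^ 2 - m2 * m3 * ξ - ξ

namespace IsSolution

variable {t0 tstar : ℝ} {m1 m2 m3 xi p : ℝ → ℝ}

theorem sum_sq_eq (h : IsSolution t0 tstar m1 m2 m3 xi p) : ∀ t ∈ Ico t0 tstar,
    m1 t ^ 2 + m2 t ^ 2 + m3 t ^ 2 = m1 t0 ^ 2 + m2 t0 ^ 2 + m3 t0 ^ 2 :=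
  eq_of_hasDerivAt_zero_Ico fun t ht =>
    ((((h.hasDerivAt_m1 t ht).pow 2).add ((h.hasDerivAt_m2 t ht).pow 2)).add
      ((h.hasDerivAt_m3 t ht).pow 2)).congr_deriv
        (by simp only [Nat.cast_ofNat, Nat.add_one_sub_one, pow_one]; ring)

theorem energy_eq (h : IsSolution t0 tstar m1 m2 m3 xi p) : ∀ t ∈ Ico t0 tstar,
    energy (m1 t) (m2 t) (m3 t) (xi t) (p t) = energy (m1 t0) (m2 t0) (m3 t0) (xi t0) (p t0) :=
  eq_of_hasDerivAt_zero_Ico (f := fun t => energy (m1 t) (m2 t) (m3 t) (xi t) (p t)) fun t ht =>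
    have hm1 := h.hasDerivAt_m1 t ht
    have hm2 := h.hasDerivAt_m2 t ht
    have hm3 := h.hasDerivAt_m3 t ht
    have hxi := h.hasDerivAt_xi t ht
    have hp := h.hasDerivAt_p t ht
    (((((hp.pow 2).sub (hm1.mul hp)).add ((hm3.pow 2).mul (hxi.pow 2))).sub
      ((hm2.mul hm3).mul hxi)).sub hxi).congr_deriv
        (by
          simp only [Nat.cast_ofNat, Nat.add_one_sub_one, pow_one, Pi.pow_apply, Pi.mul_apply]
          ring)

end IsSolution

theorem sq_le_deriv_qdot {m1 m2 m3 ξ p C E : ℝ} (hC : m1 ^ 2 + m2 ^ 2 + m3 ^ 2 = C)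
    (hE : energy m1 m2 m3 ξ p = E) (hξ : 8 * |E| + 4 * C + 4 ≤ ξ)
    (hq : (2 * p - m1) ^ 2 ≤ ξ / 4) :
    ξ ^ 2 ≤ 2 * (-(ξ ^ 2 + 1) * (1 + m2 * m3 - 2 * m3 ^ 2 * ξ))
      - ξ * (-m2 ^ 2 + m3 ^ 2 + 2 * m2 * m3 * ξ) := by
  have hid : 2 * (-(ξ ^ 2 + 1) * (1 + m2 * m3 - 2 * m3 ^ 2 * ξ))
      - ξ * (-m2 ^ 2 + m3 ^ 2 + 2 * m2 * m3 * ξ)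
      = 2 * ξ ^ 2 - ξ * (2 * p - m1) ^ 2 + ξ * (4 * E + m1 ^ 2 + m2 ^ 2 + 3 * m3 ^ 2)
        - 2 - 2 * m2 * m3 := by
    rw [← hE, energy]; ring
  rw [hid]
  have hC0 : 0 ≤ C := by rw [← hC]; positivity
  have hξ4 : 4 ≤ ξ := by linarith [abs_nonneg E]
  have hξ0 : 0 ≤ ξ := by linarith
  nlinarith [mul_le_mul_of_nonneg_left (neg_abs_le E) hξ0, mul_le_mul_of_nonneg_left hq hξ0,
    mul_le_mul_of_nonneg_left hξ hξ0, mul_le_mul_of_nonneg_left hξ4 hC0,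
    mul_nonneg hξ0 (sq_nonneg m1), mul_nonneg hξ0 (sq_nonneg m2), mul_nonneg hξ0 (sq_nonneg m3),
    mul_nonneg hξ0 (abs_nonneg E), sq_nonneg (m2 - m3), sq_nonneg m1]

end ReducedTwoBody

open ReducedTwoBody in
/-- Along a collision solution of the reduced two-body system on `[t₀, t*)` with
`t* < ∞` and `ξ(t) → +∞` as `t → t*⁻`, both `p(t) → −∞` and
`q̇ = 2p(t) − m₁(t) → −∞` as `t → t*⁻`. -/
theorem p_and_qdot_tendsto_atBot_at_collision
    (t0 tstar : ℝ) (ht0 : t0 < tstar)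
    (m1 m2 m3 xi p : ℝ → ℝ)
    (hm1 : ∀ t ∈ Set.Ico t0 tstar,
      HasDerivAt m1 (xi t * (-(m2 t)^2 + (m3 t)^2 + 2 * m2 t * m3 t * xi t)) t)
    (hm2 : ∀ t ∈ Set.Ico t0 tstar,
      HasDerivAt m2 (m1 t * m2 t * xi t - m3 t * p t - 2 * m1 t * m3 t * (xi t)^2) t)
    (hm3 : ∀ t ∈ Set.Ico t0 tstar,
      HasDerivAt m3 (m2 t * p t - m1 t * m3 t * xi t) t)
    (hxi : ∀ t ∈ Set.Ico t0 tstar,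
      HasDerivAt xi (-((xi t)^2 + 1) * (2 * p t - m1 t)) t)
    (hp : ∀ t ∈ Set.Ico t0 tstar,
      HasDerivAt p (-((xi t)^2 + 1) * (1 + m2 t * m3 t - 2 * (m3 t)^2 * xi t)) t)
    (hcoll : Tendsto xi (nhdsWithin tstar (Set.Iio tstar)) atTop) :
    Tendsto p (nhdsWithin tstar (Set.Iio tstar)) atBot ∧
      Tendsto (fun t => 2 * p t - m1 t) (nhdsWithin tstar (Set.Iio tstar)) atBot := by
  have hsol : IsSolution t0 tstar m1 m2 m3 xi p := ⟨hm1, hm2, hm3, hxi, hp⟩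
  set C := m1 t0 ^ 2 + m2 t0 ^ 2 + m3 t0 ^ 2
  set E := energy (m1 t0) (m2 t0) (m3 t0) (xi t0) (p t0)
  have hC0 : 0 ≤ C := by positivity
  obtain ⟨a, ha, htail⟩ := mem_nhdsLT_iff_exists_Ico_subset.1
    ((hcoll.eventually_ge_atTop (8 * |E| + 4 * C + 4)).and (Ioo_mem_nhdsLT ht0))
  have hsub : Ico a tstar ⊆ Ico t0 tstar := fun t ht => Ioo_subset_Ico_self (htail ht).2
  have hqdot : Tendsto (fun t => 2 * p t - m1 t) (𝓝[<] tstar) atBot :=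
    tendsto_atBot_of_tendsto_atTop ha (fun t ht => hxi t (hsub ht))
      (fun t ht => ((hp t (hsub ht)).const_mul 2).sub (hm1 t (hsub ht)))
      (fun t ht => by linarith [(htail ht).1, abs_nonneg E])
      (fun t ht hq => sq_le_deriv_qdot (hsol.sum_sq_eq t (hsub ht)) (hsol.energy_eq t (hsub ht))
        (htail ht).1 hq) hcoll
  have hm1_le : ∀ᶠ t in 𝓝[<] tstar, m1 t ≤ √C := by
    filter_upwards [Ico_mem_nhdsLT ht0] with t ht
    have hsum := hsol.sum_sq_eq t ht
    exact (le_abs_self _).trans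
      (Real.abs_le_sqrt (by nlinarith [sq_nonneg (m2 t), sq_nonneg (m3 t)]))
  refine ⟨?_, hqdot⟩
  exact ((tendsto_atBot_add_right_of_ge' _ _ hqdot hm1_le).atBot_div_const two_pos).congr
    fun t => by ring
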